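/- Let d ≥ 1, κ ≥ 1, β > 0, β₀ ∈ ℝ, and let c > 0 satisfy c‖ξ‖₁ ≤ (1/4)‖ξ‖ for all ξ ∈ ℝ^d. Let v : ℝ^d → ℂ be measurable with N₀ := (∫_{ℝ^d} ‖ξ‖^{2β₀} |v(ξ)|² dξ)^{1/2} < ∞. For t > 0 set M(t) = t^{β/κ} (∫_{ℝ^d} e^{2c t^{1/κ}‖ξ‖₁} e^{−2t‖ξ‖^κ} ‖ξ‖^{2(β₀+β)} |v(ξ)|² dξ)^{1/2}. Then: (i) there is a constant C, depending only on β and κ, with M(t) ≤ C N₀ for all t > 0; and (ii) sup_{0<t<T} M(t) → 0 as T → 0⁺. -/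

import Mathlib

/-!
Put `s = t‖ξ‖^κ`. Since `κ ≥ 1`, `t^{1/κ}‖ξ‖ = s^{1/κ} ≤ 1 + s`, so the hypothesis
`c‖ξ‖₁ ≤ ‖ξ‖/4` bounds the Gevrey factor `e^{2ct^{1/κ}‖ξ‖₁}` by `e^{(1+s)/2}`, which the heat
factor `e^{-2s}` absorbs up to `e^{1/2}e^{-s}`. As `t^{2β/κ}‖ξ‖^{2β} = s^{2β/κ}` and
`s^a e^{-s} ≤ a^a`, the integrand of `M(t)²` is at most `e^{1/2}(2β/κ)^{2β/κ}` times that of `N₀²`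
for every `t > 0`, which gives (i). For fixed `ξ` the integrand of `M(t)²` tends to `0` as
`t → 0⁺`, so `M(t) → 0` by dominated convergence, and (ii) follows.
-/

open MeasureTheory
open scoped ENNReal

/-- The quantity
`M(t) = t^{β/κ} (∫ e^{2c t^{1/κ}‖ξ‖₁} e^{−2t‖ξ‖^κ} ‖ξ‖^{2(β₀+β)} |v(ξ)|² dξ)^{1/2}`
of STATEMENT 15, with `‖ξ‖₁ = ∑ᵢ |ξᵢ|`. -/
noncomputable def Mfun (d : ℕ) (κ β β₀ c : ℝ) (v : EuclideanSpace ℝ (Fin d) → ℂ)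
    (t : ℝ) : ℝ≥0∞ :=
  ENNReal.ofReal (t ^ (β / κ)) *
    (∫⁻ ξ, ENNReal.ofReal (Real.exp (2 * c * t ^ (1 / κ) * ∑ i, |ξ i|) *
        Real.exp (-(2 * t * ‖ξ‖ ^ κ)) * ‖ξ‖ ^ (2 * (β₀ + β))) *
      (‖v ξ‖₊ : ℝ≥0∞) ^ 2) ^ (1 / 2 : ℝ)

/-- `N₀ = (∫ ‖ξ‖^{2β₀} |v(ξ)|² dξ)^{1/2}`. -/
noncomputable def N0 (d : ℕ) (β₀ : ℝ) (v : EuclideanSpace ℝ (Fin d) → ℂ) : ℝ≥0∞ :=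
  (∫⁻ ξ, ENNReal.ofReal (‖ξ‖ ^ (2 * β₀)) * (‖v ξ‖₊ : ℝ≥0∞) ^ 2) ^ (1 / 2 : ℝ)

open Real Filter Topology Set

theorem rpow_mul_exp_neg_le_rpow_self {a s : ℝ} (ha : 0 < a) (hs : 0 ≤ s) :
    s ^ a * exp (-s) ≤ a ^ a := by
  have hsa : s ≤ a * exp (s / a) := by
    have := (le_add_of_nonneg_right zero_le_one).trans (add_one_le_exp (s / a))
    rwa [div_le_iff₀' ha] at this
  calc s ^ a * exp (-s) ≤ (a * exp (s / a)) ^ a * exp (-s) := by gcongr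
    _ = a ^ a := by
      rw [mul_rpow ha.le (exp_pos _).le, ← exp_mul, div_mul_cancel₀ _ ha.ne', mul_assoc,
        ← exp_add, add_neg_cancel, exp_zero, mul_one]

theorem rpow_le_one_add {p s : ℝ} (hp₀ : 0 ≤ p) (hp₁ : p ≤ 1) (hs : 0 ≤ s) :
    s ^ p ≤ 1 + s := by
  rcases le_total s 1 with h | h
  · linarith [rpow_le_one hs h hp₀]
  · linarith [rpow_one s ▸ rpow_le_rpow_of_exponent_le h hp₁]

theorem tendsto_biSup_Ioo_of_tendsto {α : Type*} [LinearOrder α] [TopologicalSpace α]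
    [OrderTopology α] [NoMaxOrder α] {f : α → ℝ≥0∞} {a : α}
    (hf : Tendsto f (𝓝[>] a) (𝓝 0)) :
    Tendsto (fun T => ⨆ t ∈ Ioo a T, f t) (𝓝[>] a) (𝓝 0) := by
  rw [ENNReal.tendsto_nhds_zero] at hf ⊢
  intro ε hε
  obtain ⟨δ, hδ, hfδ⟩ := (nhdsGT_basis a).eventually_iff.mp (hf ε hε)
  exact (nhdsGT_basis a).eventually_iff.mpr
    ⟨δ, hδ, fun T hT => iSup₂_le fun t ht => hfδ ⟨ht.1, ht.2.trans hT.2⟩⟩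

noncomputable def gevreyHeatConst (κ β : ℝ) : ℝ := exp (1 / 2) * (2 * β / κ) ^ (2 * β / κ)

theorem gevrey_heat_multiplier_le {κ β β₀ c S r t : ℝ} (hκ : 1 ≤ κ) (hβ : 0 < β) (hr : 0 < r)
    (hcS : c * S ≤ 1 / 4 * r) (ht : 0 < t) :
    t ^ (2 * β / κ) *
        (exp (2 * c * t ^ (1 / κ) * S) * exp (-(2 * t * r ^ κ)) * r ^ (2 * (β₀ + β))) ≤
      gevreyHeatConst κ β * r ^ (2 * β₀) := by
  have hκ₀ : 0 < κ := one_pos.trans_le hκ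
  set a := 2 * β / κ
  set s := t * r ^ κ with hs
  have hs₀ : 0 ≤ s := by positivity
  have hroot : t ^ (1 / κ) * r = s ^ (1 / κ) := by
    rw [hs, mul_rpow ht.le (by positivity), one_div, rpow_rpow_inv hr.le hκ₀.ne']
  have hpow : t ^ a * r ^ (2 * (β₀ + β)) = r ^ (2 * β₀) * s ^ a := by
    rw [hs, mul_rpow ht.le (by positivity), ← rpow_mul hr.le, mul_div_cancel₀ _ hκ₀.ne',
      mul_add, rpow_add hr]
    ring
  have hgevrey : 2 * c * t ^ (1 / κ) * S ≤ (1 + s) / 2 := by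
    have hcS' := mul_le_mul_of_nonneg_left hcS (rpow_nonneg ht.le (1 / κ))
    have hs' := rpow_le_one_add (p := 1 / κ) (by positivity) ((div_le_one hκ₀).mpr hκ) hs₀
    rw [← hroot] at hs'
    linarith
  have hexp :
      exp (2 * c * t ^ (1 / κ) * S) * exp (-(2 * t * r ^ κ)) ≤ exp (1 / 2) * exp (-s) := by
    rw [← exp_add, ← exp_add]
    exact exp_le_exp.mpr (by linarith)
  calc t ^ a * (exp (2 * c * t ^ (1 / κ) * S) * exp (-(2 * t * r ^ κ)) * r ^ (2 * (β₀ + β)))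
      = r ^ (2 * β₀) * s ^ a * (exp (2 * c * t ^ (1 / κ) * S) * exp (-(2 * t * r ^ κ))) := by
        rw [← hpow]; ring
    _ ≤ r ^ (2 * β₀) * s ^ a * (exp (1 / 2) * exp (-s)) := by gcongr
    _ = exp (1 / 2) * (s ^ a * exp (-s)) * r ^ (2 * β₀) := by ring
    _ ≤ exp (1 / 2) * a ^ a * r ^ (2 * β₀) := by
        gcongr; exact rpow_mul_exp_neg_le_rpow_self (by positivity) hs₀

section

variable {d : ℕ} {κ β β₀ c t : ℝ}

noncomputable def gevreyHeatWeight (d : ℕ) (κ β β₀ c t : ℝ) (ξ : EuclideanSpace ℝ (Fin d)) : ℝ :=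
  t ^ (2 * β / κ) * (exp (2 * c * t ^ (1 / κ) * ∑ i, |ξ i|) * exp (-(2 * t * ‖ξ‖ ^ κ)) *
    ‖ξ‖ ^ (2 * (β₀ + β)))

theorem Mfun_eq_lintegral_gevreyHeatWeight (v : EuclideanSpace ℝ (Fin d) → ℂ) (ht : 0 ≤ t) :
    Mfun d κ β β₀ c v t =
      (∫⁻ ξ, ENNReal.ofReal (gevreyHeatWeight d κ β β₀ c t ξ) * ‖v ξ‖₊ ^ 2) ^ (1 / 2 : ℝ) := by
  have htβ : ENNReal.ofReal (t ^ (β / κ)) = ENNReal.ofReal (t ^ (2 * β / κ)) ^ (1 / 2 : ℝ) := by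
    rw [ENNReal.ofReal_rpow_of_nonneg (by positivity) (by norm_num), ← rpow_mul ht]
    ring_nf
  simp only [gevreyHeatWeight, ENNReal.ofReal_mul (rpow_nonneg ht _), mul_assoc]
  rw [lintegral_const_mul' _ _ ENNReal.ofReal_ne_top,
    ENNReal.mul_rpow_of_nonneg _ _ (by norm_num), ← htβ, Mfun]
  simp only [mul_assoc]

theorem ae_gevreyHeatWeight_le (hd : d ≠ 0) (hκ : 1 ≤ κ) (hβ : 0 < β)
    (hc : ∀ ξ : EuclideanSpace ℝ (Fin d), c * ∑ i, |ξ i| ≤ 1 / 4 * ‖ξ‖) (ht : 0 < t) :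
    ∀ᵐ ξ : EuclideanSpace ℝ (Fin d),
      gevreyHeatWeight d κ β β₀ c t ξ ≤ gevreyHeatConst κ β * ‖ξ‖ ^ (2 * β₀) := by
  have : NeZero d := ⟨hd⟩
  filter_upwards [volume.ae_ne 0] with ξ hξ
  exact gevrey_heat_multiplier_le hκ hβ (norm_pos_iff.mpr hξ) (hc ξ) ht

theorem ae_ofReal_gevreyHeatWeight_mul_le (hd : d ≠ 0) (hκ : 1 ≤ κ) (hβ : 0 < β)
    (hc : ∀ ξ : EuclideanSpace ℝ (Fin d), c * ∑ i, |ξ i| ≤ 1 / 4 * ‖ξ‖) (ht : 0 < t)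
    (v : EuclideanSpace ℝ (Fin d) → ℂ) :
    ∀ᵐ ξ : EuclideanSpace ℝ (Fin d),
      ENNReal.ofReal (gevreyHeatWeight d κ β β₀ c t ξ) * ‖v ξ‖₊ ^ 2 ≤
        ENNReal.ofReal (gevreyHeatConst κ β) *
          (ENNReal.ofReal (‖ξ‖ ^ (2 * β₀)) * ‖v ξ‖₊ ^ 2) := by
  filter_upwards [ae_gevreyHeatWeight_le hd hκ hβ hc ht] with ξ hξ
  rw [← mul_assoc, ← ENNReal.ofReal_mul (by unfold gevreyHeatConst; positivity)]
  gcongr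

theorem Mfun_le_mul_N0 (hd : d ≠ 0) (hκ : 1 ≤ κ) (hβ : 0 < β)
    (hc : ∀ ξ : EuclideanSpace ℝ (Fin d), c * ∑ i, |ξ i| ≤ 1 / 4 * ‖ξ‖)
    (v : EuclideanSpace ℝ (Fin d) → ℂ) (ht : 0 < t) :
    Mfun d κ β β₀ c v t ≤ ENNReal.ofReal (gevreyHeatConst κ β) ^ (1 / 2 : ℝ) * N0 d β₀ v := by
  rw [Mfun_eq_lintegral_gevreyHeatWeight v ht.le, N0,
    ← ENNReal.mul_rpow_of_nonneg _ _ (by norm_num), ← lintegral_const_mul' _ _ ENNReal.ofReal_ne_top]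
  gcongr ?_ ^ _
  exact lintegral_mono_ae (ae_ofReal_gevreyHeatWeight_mul_le hd hκ hβ hc ht v)

theorem tendsto_gevreyHeatWeight_zero (hκ : 0 < κ) (hβ : 0 < β) (ξ : EuclideanSpace ℝ (Fin d)) :
    Tendsto (fun t => gevreyHeatWeight d κ β β₀ c t ξ) (𝓝 0) (𝓝 0) := by
  have hcont : Continuous fun t => gevreyHeatWeight d κ β β₀ c t ξ := by
    unfold gevreyHeatWeight
    have := continuous_rpow_const (q := 2 * β / κ) (by positivity)
    have := continuous_rpow_const (q := 1 / κ) (by positivity)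
    fun_prop
  simpa [gevreyHeatWeight, zero_rpow (by positivity : 2 * β / κ ≠ 0)] using hcont.tendsto 0

theorem tendsto_Mfun_nhdsGT_zero (hd : d ≠ 0) (hκ : 1 ≤ κ) (hβ : 0 < β)
    (hc : ∀ ξ : EuclideanSpace ℝ (Fin d), c * ∑ i, |ξ i| ≤ 1 / 4 * ‖ξ‖)
    {v : EuclideanSpace ℝ (Fin d) → ℂ} (hv : Measurable v) (hN : N0 d β₀ v ≠ ∞) :
    Tendsto (Mfun d κ β β₀ c v) (𝓝[>] 0) (𝓝 0) := by
  have hN' : ∫⁻ ξ, ENNReal.ofReal (‖ξ‖ ^ (2 * β₀)) * ‖v ξ‖₊ ^ 2 ≠ ∞ := by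
    simpa [N0] using hN
  have hpointwise (ξ : EuclideanSpace ℝ (Fin d)) :
      Tendsto (fun t => ENNReal.ofReal (gevreyHeatWeight d κ β β₀ c t ξ) * ‖v ξ‖₊ ^ 2)
        (𝓝[>] 0) (𝓝 0) := by
    have := ENNReal.Tendsto.mul_const (b := (‖v ξ‖₊ : ℝ≥0∞) ^ 2)
      (ENNReal.tendsto_ofReal
        (tendsto_gevreyHeatWeight_zero (β₀ := β₀) (c := c) (one_pos.trans_le hκ) hβ ξ))
      (Or.inr (by finiteness))
    simpa using this.mono_left nhdsWithin_le_nhds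
  have hlim : Tendsto
      (fun t => ∫⁻ ξ, ENNReal.ofReal (gevreyHeatWeight d κ β β₀ c t ξ) * ‖v ξ‖₊ ^ 2)
      (𝓝[>] 0) (𝓝 0) := by
    simpa using tendsto_lintegral_filter_of_dominated_convergence (l := 𝓝[>] (0 : ℝ))
      (fun ξ => ENNReal.ofReal (gevreyHeatConst κ β) *
        (ENNReal.ofReal (‖ξ‖ ^ (2 * β₀)) * ‖v ξ‖₊ ^ 2))
      (Eventually.of_forall fun t => by unfold gevreyHeatWeight; fun_prop)
      (eventually_mem_nhdsWithin.mono fun t ht =>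
        ae_ofReal_gevreyHeatWeight_mul_le hd hκ hβ hc ht v)
      (by rw [lintegral_const_mul' _ _ ENNReal.ofReal_ne_top]; finiteness)
      (ae_of_all _ hpointwise)
  have hsqrt := (ENNReal.continuous_rpow_const (y := 1 / 2).tendsto 0).comp hlim
  rw [ENNReal.zero_rpow_of_pos (by norm_num)] at hsqrt
  refine hsqrt.congr' ?_
  filter_upwards [self_mem_nhdsWithin] with t ht
  exact (Mfun_eq_lintegral_gevreyHeatWeight v ht.le).symm

end

/-- Lemma 2.5 for `p = 2`, on the Fourier side: for `κ ≥ 1`, `β > 0`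
there is a constant `C` (depending only on `β` and `κ`) such that, for any `d ≥ 1`,
`β₀ ∈ ℝ`, `c > 0` with `c‖ξ‖₁ ≤ ‖ξ‖/4`, and any measurable `v` with `N₀ < ∞`:
(i) `M(t) ≤ C N₀` for all `t > 0`; and (ii) `sup_{0<t<T} M(t) → 0` as `T → 0⁺`. -/
theorem stmt15 (κ β : ℝ) (hκ : 1 ≤ κ) (hβ : 0 < β) :
    (∃ C : ℝ≥0∞, C ≠ ⊤ ∧
      ∀ d : ℕ, 1 ≤ d → ∀ β₀ c : ℝ, 0 < c →
        (∀ ξ : EuclideanSpace ℝ (Fin d), c * ∑ i, |ξ i| ≤ 1 / 4 * ‖ξ‖) →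
        ∀ v : EuclideanSpace ℝ (Fin d) → ℂ, Measurable v →
          N0 d β₀ v ≠ ⊤ →
          ∀ t : ℝ, 0 < t → Mfun d κ β β₀ c v t ≤ C * N0 d β₀ v) ∧
    (∀ d : ℕ, 1 ≤ d → ∀ β₀ c : ℝ, 0 < c →
      (∀ ξ : EuclideanSpace ℝ (Fin d), c * ∑ i, |ξ i| ≤ 1 / 4 * ‖ξ‖) →
      ∀ v : EuclideanSpace ℝ (Fin d) → ℂ, Measurable v →
        N0 d β₀ v ≠ ⊤ →
        Filter.Tendsto (fun T : ℝ => ⨆ t ∈ Set.Ioo (0 : ℝ) T, Mfun d κ β β₀ c v t)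
          (nhdsWithin 0 (Set.Ioi 0)) (nhds (0 : ℝ≥0∞))) := by
  refine ⟨⟨ENNReal.ofReal (gevreyHeatConst κ β) ^ (1 / 2 : ℝ), by finiteness, ?_⟩, ?_⟩
  · intro d hd β₀ c _ hc v _ _ t ht
    exact Mfun_le_mul_N0 (Nat.one_le_iff_ne_zero.mp hd) hκ hβ hc v ht
  · intro d hd β₀ c _ hc v hv hN
    exact tendsto_biSup_Ioo_of_tendsto
      (tendsto_Mfun_nhdsGT_zero (Nat.one_le_iff_ne_zero.mp hd) hκ hβ hc hv hN)
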